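/- arXiv:2401.11387 — 6 statements merged into one kernel-verified Lean document; each statement's English description precedes it below -/
import Mathlib

section
/- Let A = [[0,u],[1,v]] over a field F have distinct eigenvalues λ₁, λ₂ ∈ F such that λ₁/λ₂ is not a root of unity. If a homogeneous polynomial p ∈ F[α,β] of degree n satisfies σ^k(p) = c·p for some positive integer k and some nonzero c ∈ F, then σ(p) = d·p for some nonzero d ∈ F, where σ is the automorphism with σ(α)=β, σ(β)=uα+vβ. -/
/-!
For a root `λ` of `X² - vX - u`, the linear form `u α + λ β` is an eigenvector of `σ` with
eigenvalue `λ`. Since `u ≠ 0` and `λ₁ ≠ λ₂`, the substitution `α ↦ u α + λ₁ β, β ↦ u α + λ₂ β`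
is invertible and conjugates `σ` to the diagonal automorphism `ψ : α ↦ λ₁ α, β ↦ λ₂ β`, which
scales the monomial `α^a β^b` by `λ₁^a λ₂^b`. Transporting `p` gives a homogeneous `q` of degree
`n` with `ψ^k q = c q`, so `(λ₁^a λ₂^b)^k = c` for every monomial of `q`. On monomials of degree
`n` this number is `λ₂^(nk) (λ₁/λ₂)^(ak)`, and `λ₁/λ₂` is not a root of unity, so `q` has at most
one monomial and is therefore an eigenvector of `ψ`.
-/

open MvPolynomial

namespace MvPolynomial

section LinearSubst

variable {ι R : Type*} [Fintype ι]

section CommSemiring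

variable [CommSemiring R]

noncomputable def linearSubst (P : Matrix ι ι R) : MvPolynomial ι R →ₐ[R] MvPolynomial ι R :=
  aeval fun i => ∑ j, C (P i j) * X j

@[simp]
lemma linearSubst_X (P : Matrix ι ι R) (i : ι) :
    linearSubst P (X i) = ∑ j, C (P i j) * X j :=
  aeval_X _ _

lemma linearSubst_one [DecidableEq ι] : linearSubst (1 : Matrix ι ι R) = AlgHom.id R _ :=
  algHom_ext fun i => by simp [Matrix.one_apply]

lemma linearSubst_comp_linearSubst (P Q : Matrix ι ι R) :
    (linearSubst P).comp (linearSubst Q) = linearSubst (Q * P) := by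
  refine algHom_ext fun i => ?_
  simp only [AlgHom.comp_apply, linearSubst_X, map_sum, map_mul, algHom_C, algebraMap_eq,
    Matrix.mul_apply, Finset.mul_sum, Finset.sum_mul, mul_assoc]
  exact Finset.sum_comm

lemma IsHomogeneous.linearSubst {p : MvPolynomial ι R} {n : ℕ} (hp : p.IsHomogeneous n)
    (P : Matrix ι ι R) : (linearSubst P p).IsHomogeneous n := by
  rw [← one_mul n]
  exact hp.aeval _ fun i => IsHomogeneous.sum _ _ _ fun j _ => isHomogeneous_C_mul_X (P i j) j

end CommSemiring

variable [CommRing R] [DecidableEq ι]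

noncomputable def linearSubstEquiv (P : Matrix ι ι R) (hP : IsUnit P.det) :
    MvPolynomial ι R ≃ₐ[R] MvPolynomial ι R :=
  AlgEquiv.ofAlgHom (linearSubst P) (linearSubst P⁻¹)
    (by rw [linearSubst_comp_linearSubst, Matrix.nonsing_inv_mul _ hP, linearSubst_one])
    (by rw [linearSubst_comp_linearSubst, Matrix.mul_nonsing_inv _ hP, linearSubst_one])

lemma linearSubstEquiv_apply (P : Matrix ι ι R) (hP : IsUnit P.det) (p : MvPolynomial ι R) :
    linearSubstEquiv P hP p = linearSubst P p :=
  rfl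

lemma linearSubstEquiv_symm_apply (P : Matrix ι ι R) (hP : IsUnit P.det)
    (p : MvPolynomial ι R) : (linearSubstEquiv P hP).symm p = linearSubst P⁻¹ p :=
  rfl

end LinearSubst

section Diagonal

variable {ι R G : Type*} [CommSemiring R] [FunLike G (MvPolynomial ι R) (MvPolynomial ι R)]
  [AlgHomClass G R (MvPolynomial ι R) (MvPolynomial ι R)]

lemma algHomClass_C (ψ : G) (a : R) : ψ (C a) = C a :=
  AlgHomClass.commutes ψ a

lemma map_monomial_of_map_X_eq_C_mul {ψ : G} {μ : ι → R}
    (hψ : ∀ i, ψ (X i) = C (μ i) * X i) (m : ι →₀ ℕ) (a : R) :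
    ψ (monomial m a) = monomial m ((m.prod fun i e => μ i ^ e) * a) := by
  simp only [monomial_eq, map_mul, algHomClass_C, Finsupp.prod, map_prod, map_pow, hψ,
    mul_pow, Finset.prod_mul_distrib]
  ring

lemma coeff_map_of_map_X_eq_C_mul {ψ : G} {μ : ι → R}
    (hψ : ∀ i, ψ (X i) = C (μ i) * X i) (p : MvPolynomial ι R) (m : ι →₀ ℕ) :
    coeff m (ψ p) = (m.prod fun i e => μ i ^ e) * coeff m p := by
  classical
  induction p using MvPolynomial.induction_on' with
  | monomial m' a =>
    rw [map_monomial_of_map_X_eq_C_mul hψ, coeff_monomial, coeff_monomial]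
    split_ifs with h
    · rw [h]
    · rw [mul_zero]
  | add p q hp hq => rw [map_add, coeff_add, coeff_add, hp, hq, mul_add]

lemma _root_.AlgEquiv.pow_apply_X_of_apply_X_eq_C_mul
    {ψ : MvPolynomial ι R ≃ₐ[R] MvPolynomial ι R} {μ : ι → R}
    (hψ : ∀ i, ψ (X i) = C (μ i) * X i) (k : ℕ) (i : ι) :
    (ψ ^ k) (X i) = C (μ i ^ k) * X i := by
  induction k with
  | zero => simp
  | succ k ih =>
    rw [pow_succ', AlgEquiv.mul_apply, ih, map_mul, hψ, algHomClass_C, pow_succ, C_mul, mul_assoc]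

end Diagonal

end MvPolynomial

lemma pow_injective_of_forall_pow_ne_one {M₀ : Type*} [GroupWithZero M₀] {r : M₀} (hr : r ≠ 0)
    (hroot : ∀ n : ℕ, 0 < n → r ^ n ≠ 1) : Function.Injective (r ^ · : ℕ → M₀) := by
  have horder : orderOf (Units.mk0 r hr) = 0 := by
    rw [← orderOf_units]
    exact orderOf_eq_zero_iff'.mpr hroot
  intro a b hab
  exact (pow_inj_iff_of_orderOf_eq_zero horder).mp (Units.ext (by simpa using hab))

namespace Finsupp

variable {F : Type*} [Field F]

lemma prod_pow_fin_two {μ : Fin 2 → F} (hμ : μ 1 ≠ 0) (m : Fin 2 →₀ ℕ) :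
    (m.prod fun i e => μ i ^ e) = μ 1 ^ m.degree * (μ 0 / μ 1) ^ m 0 := by
  rw [prod_fintype _ _ fun _ => pow_zero _, Fin.prod_univ_two, degree_eq_sum, Fin.sum_univ_two,
    div_pow, pow_add]
  field_simp

lemma eq_of_degree_eq_of_prod_pow_pow_eq {μ : Fin 2 → F} (hμ : ∀ i, μ i ≠ 0)
    (hroot : ∀ n : ℕ, 0 < n → (μ 0 / μ 1) ^ n ≠ 1) {k : ℕ} (hk : 0 < k) {m m' : Fin 2 →₀ ℕ}
    (hdeg : m.degree = m'.degree)
    (h : (m.prod fun i e => μ i ^ e) ^ k = (m'.prod fun i e => μ i ^ e) ^ k) : m = m' := by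
  rw [prod_pow_fin_two (hμ 1), prod_pow_fin_two (hμ 1), hdeg, mul_pow, mul_pow,
    mul_right_inj' (pow_ne_zero _ (pow_ne_zero _ (hμ 1))), ← pow_mul, ← pow_mul] at h
  have h0 : m 0 = m' 0 :=
    Nat.eq_of_mul_eq_mul_right hk
      (pow_injective_of_forall_pow_ne_one (div_ne_zero (hμ 0) (hμ 1)) hroot h)
  have h1 : m 1 = m' 1 := by
    rw [degree_eq_sum, degree_eq_sum, Fin.sum_univ_two, Fin.sum_univ_two] at hdeg
    omega
  ext i
  fin_cases i
  exacts [h0, h1]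

end Finsupp

namespace MvPolynomial

theorem exists_apply_eq_C_mul_of_pow_apply_eq_C_mul {F : Type*} [Field F]
    {ψ : MvPolynomial (Fin 2) F ≃ₐ[F] MvPolynomial (Fin 2) F} {μ : Fin 2 → F}
    (hψ : ∀ i, ψ (X i) = C (μ i) * X i) (hμ : ∀ i, μ i ≠ 0)
    (hroot : ∀ n : ℕ, 0 < n → (μ 0 / μ 1) ^ n ≠ 1)
    {q : MvPolynomial (Fin 2) F} {n : ℕ} (hq : q.IsHomogeneous n)
    {k : ℕ} (hk : 0 < k) {c : F} (hqk : (ψ ^ k) q = C c * q) :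
    ∃ d : F, d ≠ 0 ∧ ψ q = C d * q := by
  set w : (Fin 2 →₀ ℕ) → F := fun m => m.prod fun i e => μ i ^ e
  have hcoeff : ∀ m, coeff m (ψ q) = w m * coeff m q := coeff_map_of_map_X_eq_C_mul hψ q
  have hw : ∀ m ∈ q.support, w m ^ k = c := by
    intro m hm
    have hpow : (m.prod fun i e => (μ i ^ k) ^ e) = w m ^ k := by
      simp only [w, Finsupp.prod, ← Finset.prod_pow, ← pow_mul, mul_comm k]
    have h := congrArg (coeff m) hqk
    rw [coeff_map_of_map_X_eq_C_mul (ψ.pow_apply_X_of_apply_X_eq_C_mul hψ k), coeff_C_mul,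
      hpow] at h
    exact mul_right_cancel₀ (mem_support_iff.mp hm) h
  have hdeg : ∀ m ∈ q.support, m.degree = n := fun m hm => by
    by_contra h
    exact mem_support_iff.mp hm (hq.coeff_eq_zero h)
  have hsingle : ∀ m ∈ q.support, ∀ m' ∈ q.support, m = m' := fun m hm m' hm' =>
    Finsupp.eq_of_degree_eq_of_prod_pow_pow_eq hμ hroot hk
      ((hdeg m hm).trans (hdeg m' hm').symm) ((hw m hm).trans (hw m' hm').symm)
  rcases q.support.eq_empty_or_nonempty with hempty | ⟨m₀, hm₀⟩
  · exact ⟨1, one_ne_zero, by simp [support_eq_empty.mp hempty]⟩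
  refine ⟨w m₀, Finset.prod_ne_zero_iff.mpr fun i _ => pow_ne_zero _ (hμ i), ?_⟩
  ext m
  rw [hcoeff, coeff_C_mul]
  by_cases hm : m ∈ q.support
  · rw [hsingle m hm m₀ hm₀]
  · rw [notMem_support_iff.mp hm, mul_zero, mul_zero]

lemma apply_C_mul_X_add_C_mul_X_of_sq_eq {R : Type*} [CommRing R] {u v : R}
    {σ : MvPolynomial (Fin 2) R ≃ₐ[R] MvPolynomial (Fin 2) R}
    (hα : σ (X 0) = X 1) (hβ : σ (X 1) = C u * X 0 + C v * X 1) {l : R}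
    (hl : l ^ 2 = v * l + u) :
    σ (C u * X 0 + C l * X 1) = C l * (C u * X 0 + C l * X 1) := by
  have hCl : (C l ^ 2 : MvPolynomial (Fin 2) R) = C v * C l + C u := by
    rw [← C_pow, hl, C_add, C_mul]
  rw [map_add, map_mul, map_mul, algHomClass_C, algHomClass_C, hα, hβ]
  linear_combination (-X 1 : MvPolynomial (Fin 2) R) * hCl

end MvPolynomial

theorem stmt3_general {F : Type*} [Field F] (u v : F) (hu : u ≠ 0)
    (σ : MvPolynomial (Fin 2) F ≃ₐ[F] MvPolynomial (Fin 2) F)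
    (hα : σ (X 0) = X 1) (hβ : σ (X 1) = C u * X 0 + C v * X 1)
    (lam1 lam2 : F) (hl1 : lam1 ^ 2 = v * lam1 + u) (hl2 : lam2 ^ 2 = v * lam2 + u)
    (hne : lam1 ≠ lam2)
    (hroot : ∀ n : ℕ, 0 < n → (lam1 / lam2) ^ n ≠ 1)
    (p : MvPolynomial (Fin 2) F) (n : ℕ) (hp : p.IsHomogeneous n)
    (k : ℕ) (hk : 0 < k) (c : F) (hσk : (σ ^ k) p = C c * p) :
    ∃ d : F, d ≠ 0 ∧ σ p = C d * p := by
  have hlam_ne_zero {l : F} (hl : l ^ 2 = v * l + u) : l ≠ 0 := fun h0 =>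
    hu (by simpa [h0] using hl.symm)
  set μ : Fin 2 → F := ![lam1, lam2]
  set P : Matrix (Fin 2) (Fin 2) F := !![u, lam1; u, lam2]
  have hP : IsUnit P.det := by
    rw [Matrix.det_fin_two_of, isUnit_iff_ne_zero,
      show u * lam2 - lam1 * u = u * (lam2 - lam1) by ring]
    exact mul_ne_zero hu (sub_ne_zero.mpr hne.symm)
  set E := linearSubstEquiv P hP
  have hE : ∀ i, σ (E (X i)) = C (μ i) * E (X i) := by
    intro i
    fin_cases i <;>
      simp [E, linearSubstEquiv_apply, Fin.sum_univ_two, P, μ,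
        apply_C_mul_X_add_C_mul_X_of_sq_eq hα hβ hl1, apply_C_mul_X_add_C_mul_X_of_sq_eq hα hβ hl2]
  set ψ := E⁻¹ * σ * E
  have hψ : ∀ i, ψ (X i) = C (μ i) * X i := fun i => by
    rw [AlgEquiv.mul_apply, AlgEquiv.mul_apply, hE, map_mul, algHomClass_C, AlgEquiv.aut_inv,
      E.symm_apply_apply]
  have hψk : ψ ^ k = E⁻¹ * σ ^ k * E := by simpa using conj_pow (a := E⁻¹) (b := σ) (i := k)
  have hq : (E.symm p).IsHomogeneous n := by
    rw [linearSubstEquiv_symm_apply]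
    exact hp.linearSubst P⁻¹
  have hqk : (ψ ^ k) (E.symm p) = C c * E.symm p := by
    rw [hψk, AlgEquiv.mul_apply, AlgEquiv.mul_apply, AlgEquiv.aut_inv, E.apply_symm_apply, hσk,
      map_mul, algHomClass_C]
  obtain ⟨d, hd, hψq⟩ := exists_apply_eq_C_mul_of_pow_apply_eq_C_mul hψ
    (by simp [μ, Fin.forall_fin_two, hlam_ne_zero hl1, hlam_ne_zero hl2]) hroot hq hk hqk
  refine ⟨d, hd, ?_⟩
  have h := congrArg E hψq
  rwa [AlgEquiv.mul_apply, AlgEquiv.mul_apply, E.apply_symm_apply, AlgEquiv.aut_inv,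
    E.apply_symm_apply, map_mul, algHomClass_C, E.apply_symm_apply] at h

theorem stmt3 {F : Type*} [Field F] (u v : F) (hu : u ≠ 0)
    (σ : MvPolynomial (Fin 2) F ≃ₐ[F] MvPolynomial (Fin 2) F)
    (hα : σ (X 0) = X 1) (hβ : σ (X 1) = C u * X 0 + C v * X 1)
    (lam1 lam2 : F) (hl1 : lam1 ^ 2 = v * lam1 + u) (hl2 : lam2 ^ 2 = v * lam2 + u)
    (hne : lam1 ≠ lam2)
    (hroot : ∀ n : ℕ, 0 < n → (lam1 / lam2) ^ n ≠ 1)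
    (p : MvPolynomial (Fin 2) F) (n : ℕ) (hp : p.IsHomogeneous n)
    (k : ℕ) (hk : 0 < k) (c : F) (hc : c ≠ 0) (hσk : (σ ^ k) p = C c * p) :
    ∃ d : F, d ≠ 0 ∧ σ p = C d * p :=
  stmt3_general u v hu σ hα hβ lam1 lam2 hl1 hl2 hne hroot p n hp k hk c hσk
end

section
/- Let σ be a degree-preserving automorphism of F[α,β]. If p ∈ F[α,β]∖F and m ∈ ℕ⁺ satisfy p | σ^m(p), then Dis_σ(h·σⁿ(p), g·p) = +∞ for any nonzero g, h ∈ F[α,β] and any integer n. -/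
open MvPolynomial

/-- The spread of two polynomials: the set of natural numbers `m` such that
`p` and `σ^m q` have a nontrivial (nonconstant) common factor. -/
def Spr {F : Type*} [Field F]
    (σ : MvPolynomial (Fin 2) F ≃ₐ[F] MvPolynomial (Fin 2) F)
    (p q : MvPolynomial (Fin 2) F) : Set ℕ :=
  {m | ∃ d : MvPolynomial (Fin 2) F, 0 < d.totalDegree ∧ d ∣ p ∧ d ∣ (σ ^ m) q}

/-- The dispersion: `⊥` (playing the role of `-1`) if the spread is empty, its maximum
if finite nonempty, and `⊤` (i.e. `+∞`) if the spread is infinite. -/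
noncomputable def Dis {F : Type*} [Field F]
    (σ : MvPolynomial (Fin 2) F ≃ₐ[F] MvPolynomial (Fin 2) F)
    (p q : MvPolynomial (Fin 2) F) : WithBot ℕ∞ :=
  sSup ((fun m : ℕ => ((m : ℕ∞) : WithBot ℕ∞)) '' Spr σ p q)

/-!
The polynomial `d = σⁿ p` divides `h σⁿ p` and, since `p ∣ σ^(m k) p` for every `k`, also
`σ^(n + m k) p`, hence `σ^(n + m k) (g p)`. As `σ` preserves degrees, `d` is nonconstant, so the
spread contains `n + m k` for all large `k` and is therefore infinite.
-/

theorem AlgEquiv.apply_zpow_apply_eq {R A β : Type*} [CommSemiring R] [Semiring A] [Algebra R A]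
    (σ : A ≃ₐ[R] A) (f : A → β) (hf : ∀ a, f (σ a) = f a) (j : ℤ) (a : A) :
    f ((σ ^ j) a) = f a := by
  induction j using Int.induction_on generalizing a with
  | zero => simp
  | succ i ih => rw [zpow_add_one, AlgEquiv.mul_apply, ih, hf]
  | pred i ih =>
    rw [zpow_sub_one, AlgEquiv.mul_apply, ih, AlgEquiv.aut_inv, ← hf, AlgEquiv.apply_symm_apply]

theorem AlgEquiv.dvd_pow_apply_of_dvd_apply {R A : Type*} [CommSemiring R] [Semiring A]
    [Algebra R A] (τ : A ≃ₐ[R] A) {p : A} (hp : p ∣ τ p) (k : ℕ) : p ∣ (τ ^ k) p := by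
  induction k with
  | zero => simp
  | succ k ih => exact ih.trans (by simpa only [pow_succ, AlgEquiv.mul_apply] using map_dvd _ hp)

theorem Dis_eq_top_of_infinite {F : Type*} [Field F]
    (σ : MvPolynomial (Fin 2) F ≃ₐ[F] MvPolynomial (Fin 2) F) {p q : MvPolynomial (Fin 2) F}
    (hinf : (Spr σ p q).Infinite) : Dis σ p q = ⊤ := by
  rw [Dis, sSup_eq_top]
  intro b hb
  obtain ⟨N, hN⟩ : ∃ N : ℕ, b < ((N : ℕ∞) : WithBot ℕ∞) := by
    induction b using WithBot.recBotCoe with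
    | bot => exact ⟨0, WithBot.bot_lt_coe _⟩
    | coe e =>
      obtain ⟨N, hN⟩ := ENat.exists_nat_gt (WithBot.coe_lt_coe.mp hb).ne
      exact ⟨N, WithBot.coe_lt_coe.mpr hN⟩
  obtain ⟨j, hj, hNj⟩ := hinf.exists_gt N
  exact ⟨_, ⟨j, hj, rfl⟩, hN.trans (by simpa using hNj)⟩

theorem mem_Spr_mul_zpow_apply_of_dvd {F : Type*} [Field F]
    {σ : MvPolynomial (Fin 2) F ≃ₐ[F] MvPolynomial (Fin 2) F}
    (hdeg : ∀ p : MvPolynomial (Fin 2) F, (σ p).totalDegree = p.totalDegree)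
    {p : MvPolynomial (Fin 2) F} (hpF : 0 < p.totalDegree) (g h : MvPolynomial (Fin 2) F)
    {n : ℤ} {j : ℕ} (hj : p ∣ (σ ^ ((j : ℤ) - n)) p) :
    j ∈ Spr σ (h * (σ ^ n) p) (g * p) := by
  refine ⟨(σ ^ n) p, ?_, dvd_mul_left _ _, ?_⟩
  · rwa [σ.apply_zpow_apply_eq _ hdeg]
  · rw [map_mul]
    refine Dvd.dvd.mul_left ?_ _
    simpa only [← AlgEquiv.mul_apply, ← zpow_add, add_sub_cancel, zpow_natCast]
      using map_dvd (σ ^ n) hj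

theorem stmt8_general {F : Type*} [Field F]
    (σ : MvPolynomial (Fin 2) F ≃ₐ[F] MvPolynomial (Fin 2) F)
    (hdeg : ∀ p : MvPolynomial (Fin 2) F, (σ p).totalDegree = p.totalDegree)
    (p : MvPolynomial (Fin 2) F) (hpF : 0 < p.totalDegree)
    (m : ℕ) (hm : 0 < m) (hdvd : p ∣ (σ ^ m) p)
    (g h : MvPolynomial (Fin 2) F) (n : ℤ) :
    Dis σ (h * (σ ^ n) p) (g * p) = ⊤ := by
  refine Dis_eq_top_of_infinite σ (Set.infinite_of_forall_exists_gt fun N => ?_)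
  set k := N + n.natAbs + 1
  have hkm : k ≤ m * k := Nat.le_mul_of_pos_left k hm
  have hj : (((n + (m * k : ℕ)).toNat : ℕ) : ℤ) - n = (m * k : ℕ) := by omega
  refine ⟨(n + (m * k : ℕ)).toNat, mem_Spr_mul_zpow_apply_of_dvd hdeg hpF g h ?_, by omega⟩
  rw [hj, zpow_natCast, pow_mul]
  exact (σ ^ m).dvd_pow_apply_of_dvd_apply hdvd k

theorem stmt8 {F : Type*} [Field F]
    (σ : MvPolynomial (Fin 2) F ≃ₐ[F] MvPolynomial (Fin 2) F)
    (hdeg : ∀ p : MvPolynomial (Fin 2) F, (σ p).totalDegree = p.totalDegree)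
    (p : MvPolynomial (Fin 2) F) (hpF : 0 < p.totalDegree)
    (m : ℕ) (hm : 0 < m) (hdvd : p ∣ (σ ^ m) p)
    (g h : MvPolynomial (Fin 2) F) (hg : g ≠ 0) (hh : h ≠ 0) (n : ℤ) :
    Dis σ (h * (σ ^ n) p) (g * p) = ⊤ :=
  stmt8_general σ hdeg p hpF m hm hdvd g h n
end

section
/- Let σ be a degree-preserving automorphism of F[α,β] restricting to an automorphism of F. For nonzero q, r ∈ F[α,β], Dis_σ(q, r) = +∞ if and only if r has a nonconstant factor p that is semi-periodic (σ^k(p) = c·p for some k>0, nonzero c ∈ F) such that σⁿ(p) | q for some integer n ≥ 0. -/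
open MvPolynomial


open MvPolynomial

/-!
`Dis_σ(q, r) = +∞` says that for infinitely many `m` some irreducible `p ∣ r` has `σ^m p ∣ q`.
Up to associates `q` and `r` have only finitely many irreducible factors, so two such shifts
`i < j` give the same classes of `p` and of `σ^m p`; then `σ^(j-i) p` is associated to `p`,
i.e. `p` is semi-periodic. Conversely, if `σ^k p = c p` and `σ^n p ∣ q`, every `n + j k` lies in
the spread. Nonconstant polynomials are exactly the nonzero non-units, so all of this is an
argument about a group acting multiplicatively on a unique factorization monoid.
-/

section

variable {G α : Type*} [Group G] [CommMonoidWithZero α] [MulDistribMulAction G α]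

theorem MulDistribMulAction.smul_dvd_smul (g : G) {a b : α} (h : a ∣ b) : g • a ∣ g • b :=
  map_dvd (MulDistribMulAction.toMulEquiv α g) h

theorem MulDistribMulAction.smul_associated_smul (g : G) {a b : α} (h : Associated a b) :
    Associated (g • a) (g • b) :=
  h.map (MulDistribMulAction.toMulEquiv α g)

theorem MulDistribMulAction.irreducible_smul (g : G) {a : α} (h : Irreducible a) :
    Irreducible (g • a) :=
  h.map (MulDistribMulAction.toMulEquiv α g)

theorem MulDistribMulAction.isUnit_smul_iff (g : G) {a : α} : IsUnit (g • a) ↔ IsUnit a :=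
  isUnit_map_iff (MulDistribMulAction.toMulEquiv α g) a

open MulDistribMulAction

def spread (g : G) (q r : α) : Set ℕ :=
  {m | ∃ d, d ≠ 0 ∧ ¬IsUnit d ∧ d ∣ q ∧ d ∣ g ^ m • r}

theorem mem_spread_iff_exists_irreducible [UniqueFactorizationMonoid α] {g : G} {q r : α}
    {m : ℕ} : m ∈ spread g q r ↔ ∃ p, Irreducible p ∧ p ∣ r ∧ g ^ m • p ∣ q := by
  constructor
  · rintro ⟨d, hd0, hdu, hdq, hdr⟩
    obtain ⟨e, he, hed⟩ := WfDvdMonoid.exists_irreducible_factor hdu hd0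
    refine ⟨(g ^ m)⁻¹ • e, irreducible_smul _ he, ?_, by simpa using hed.trans hdq⟩
    simpa using smul_dvd_smul (g ^ m)⁻¹ (hed.trans hdr)
  · rintro ⟨p, hp, hpr, hpq⟩
    have hgp := irreducible_smul (g ^ m) hp
    exact ⟨g ^ m • p, hgp.ne_zero, hgp.not_isUnit, hpq, smul_dvd_smul _ hpr⟩

theorem finite_associates_irreducible_dvd [UniqueFactorizationMonoid α] {r : α} (hr : r ≠ 0) :
    (Associates.mk '' {p | Irreducible p ∧ p ∣ r}).Finite := by
  classical
  refine ((UniqueFactorizationMonoid.factors r).toFinset.finite_toSet.image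
    Associates.mk).subset ?_
  rintro _ ⟨p, ⟨hp, hpr⟩, rfl⟩
  obtain ⟨f, hf, hpf⟩ := UniqueFactorizationMonoid.exists_mem_factors_of_dvd hr hp hpr
  exact ⟨f, Multiset.mem_toFinset.2 hf, (Associates.mk_eq_mk_iff_associated.2 hpf).symm⟩

theorem exists_semiperiodic_factor_of_spread_infinite [UniqueFactorizationMonoid α] {g : G}
    {q r : α} (hq : q ≠ 0) (hr : r ≠ 0) (h : (spread g q r).Infinite) :
    ∃ p, Irreducible p ∧ p ∣ r ∧ (∃ k, 0 < k ∧ Associated p (g ^ k • p)) ∧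
      ∃ n, g ^ n • p ∣ q := by
  choose! p hp hpr hpq using
    fun m (hm : m ∈ spread g q r) => mem_spread_iff_exists_irreducible.1 hm
  have hmaps : Set.MapsTo (fun m => (Associates.mk (p m), Associates.mk (g ^ m • p m)))
      (spread g q r) ((Associates.mk '' {p | Irreducible p ∧ p ∣ r}) ×ˢ
        (Associates.mk '' {p | Irreducible p ∧ p ∣ q})) := fun m hm =>
    ⟨⟨p m, ⟨hp m hm, hpr m hm⟩, rfl⟩, ⟨_, ⟨irreducible_smul _ (hp m hm), hpq m hm⟩, rfl⟩⟩
  obtain ⟨i, -, j, hj, hij, hpij⟩ := h.exists_lt_map_eq_of_mapsTo hmaps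
    ((finite_associates_irreducible_dvd hr).prod (finite_associates_irreducible_dvd hq))
  simp only [Prod.mk.injEq, Associates.mk_eq_mk_iff_associated] at hpij
  obtain ⟨hp_ij, hgp_ij⟩ := hpij
  -- `g ^ i • (g ^ (j - i) • p j) = g ^ j • p j ~ g ^ i • p i ~ g ^ i • p j`; now cancel `g ^ i`.
  have hshift : Associated (g ^ i • p j) (g ^ i • g ^ (j - i) • p j) := by
    rw [smul_smul, ← pow_add, Nat.add_sub_cancel' hij.le]
    exact (smul_associated_smul _ hp_ij).symm.trans hgp_ij
  refine ⟨p j, hp j hj, hpr j hj, ⟨j - i, Nat.sub_pos_of_lt hij, ?_⟩, j, hpq j hj⟩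
  simpa using smul_associated_smul (g ^ i)⁻¹ hshift

theorem associated_pow_mul_smul {g : G} {p : α} {k : ℕ} (h : Associated p (g ^ k • p))
    (j : ℕ) : Associated p (g ^ (j * k) • p) := by
  induction j with
  | zero => simp
  | succ j ih =>
    rw [add_mul, one_mul, pow_add, mul_smul]
    exact ih.trans (smul_associated_smul _ h)

theorem spread_infinite_of_semiperiodic_factor {g : G} {q r p : α} (hq : q ≠ 0) (hpu : ¬IsUnit p)
    (hpr : p ∣ r) {k : ℕ} (hk : 0 < k) (hper : Associated p (g ^ k • p)) {n : ℕ}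
    (hn : g ^ n • p ∣ q) : (spread g q r).Infinite := by
  refine Set.infinite_of_injective_forall_mem (f := fun j => n + j * k)
    (fun a b hab => Nat.eq_of_mul_eq_mul_right hk (Nat.add_left_cancel hab)) fun j => ?_
  have hdq : g ^ (n + j * k) • p ∣ q := by
    rw [pow_add, mul_smul]
    exact (smul_associated_smul _ (associated_pow_mul_smul hper j)).dvd'.trans hn
  exact ⟨_, ne_zero_of_dvd_ne_zero hq hdq, (MulDistribMulAction.isUnit_smul_iff _).not.2 hpu,
    hdq, smul_dvd_smul _ hpr⟩

theorem spread_infinite_iff [UniqueFactorizationMonoid α] {g : G} {q r : α} (hq : q ≠ 0)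
    (hr : r ≠ 0) : (spread g q r).Infinite ↔
      ∃ p, p ∣ r ∧ (p ≠ 0 ∧ ¬IsUnit p) ∧ (∃ k, 0 < k ∧ Associated p (g ^ k • p)) ∧
        ∃ n, g ^ n • p ∣ q := by
  constructor
  · intro h
    obtain ⟨p, hp, hpr, hper, hpq⟩ := exists_semiperiodic_factor_of_spread_infinite hq hr h
    exact ⟨p, hpr, ⟨hp.ne_zero, hp.not_isUnit⟩, hper, hpq⟩
  · rintro ⟨p, hpr, ⟨-, hpu⟩, ⟨k, hk, hper⟩, n, hn⟩
    exact spread_infinite_of_semiperiodic_factor hq hpu hpr hk hper hn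

end

theorem sSup_image_natCast_eq_top_iff (S : Set ℕ) :
    sSup ((fun m : ℕ => ((m : ℕ∞) : WithBot ℕ∞)) '' S) = ⊤ ↔ S.Infinite := by
  constructor
  · intro h hfin
    obtain ⟨N, hN⟩ := hfin.bddAbove
    have hle : sSup ((fun m : ℕ => ((m : ℕ∞) : WithBot ℕ∞)) '' S) ≤ ((N : ℕ∞) : WithBot ℕ∞) :=
      sSup_le (by rintro _ ⟨m, hm, rfl⟩; simpa using hN hm)
    rw [h] at hle
    exact absurd hle (not_le.2 (WithBot.coe_lt_coe.2 (ENat.natCast_lt_top N)))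
  · intro h
    refine sSup_eq_top.2 fun b hb => ?_
    obtain ⟨t, hbt⟩ : ∃ t : ℕ, b ≤ ((t : ℕ∞) : WithBot ℕ∞) := by
      induction b using WithBot.recBotCoe with
      | bot => exact ⟨0, bot_le⟩
      | coe x =>
        lift x to ℕ using (by rintro rfl; exact lt_irrefl _ hb)
        exact ⟨x, le_rfl⟩
    obtain ⟨m, hm, htm⟩ := h.exists_gt t
    exact ⟨_, ⟨m, hm, rfl⟩, hbt.trans_lt (by simpa using htm)⟩

namespace MvPolynomial

variable {τ F : Type*} [Field F]

theorem totalDegree_pos_iff {p : MvPolynomial τ F} : 0 < p.totalDegree ↔ p ≠ 0 ∧ ¬IsUnit p := by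
  rw [pos_iff_ne_zero, isUnit_iff_eq_C_of_isReduced, Ne, totalDegree_eq_zero_iff_eq_C]
  constructor
  · intro h
    exact ⟨fun h0 => h (by simp [h0]), fun ⟨c, _, hc⟩ => h (by rw [hc, coeff_zero_C])⟩
  · rintro ⟨h0, hu⟩ hc
    refine hu ⟨_, isUnit_iff_ne_zero.2 fun hc0 => h0 ?_, hc⟩
    rw [hc, hc0, C_0]

theorem associated_iff_exists_eq_C_mul {p q : MvPolynomial τ F} :
    Associated p q ↔ ∃ c : F, c ≠ 0 ∧ q = C c * p := by
  constructor
  · rintro ⟨u, rfl⟩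
    obtain ⟨c, hc, hu⟩ := isUnit_iff_eq_C_of_isReduced.1 u.isUnit
    exact ⟨c, hc.ne_zero, by rw [hu, mul_comm]⟩
  · rintro ⟨c, hc, rfl⟩
    exact (associated_unit_mul_left p (C c) (hc.isUnit.map C)).symm

end MvPolynomial

theorem Spr_eq_spread {F : Type*} [Field F]
    (σ : MvPolynomial (Fin 2) F ≃ₐ[F] MvPolynomial (Fin 2) F) (q r : MvPolynomial (Fin 2) F) :
    Spr σ q r = spread σ q r := by
  ext m
  simp only [Spr, spread, totalDegree_pos_iff, AlgEquiv.smul_def, and_assoc, Set.mem_ofPred_eq]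

theorem stmt9_general {F : Type*} [Field F]
    (σ : MvPolynomial (Fin 2) F ≃ₐ[F] MvPolynomial (Fin 2) F)
    (q r : MvPolynomial (Fin 2) F) (hq : q ≠ 0) (hr : r ≠ 0) :
    Dis σ q r = ⊤ ↔
      ∃ p : MvPolynomial (Fin 2) F, p ∣ r ∧ 0 < p.totalDegree ∧
        (∃ k : ℕ, 0 < k ∧ ∃ c : F, c ≠ 0 ∧ (σ ^ k) p = C c * p) ∧
        ∃ n : ℕ, (σ ^ n) p ∣ q := by
  rw [Dis, sSup_image_natCast_eq_top_iff, Spr_eq_spread, spread_infinite_iff hq hr]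
  simp only [totalDegree_pos_iff, associated_iff_exists_eq_C_mul, AlgEquiv.smul_def]

theorem stmt9 {F : Type*} [Field F]
    (σ : MvPolynomial (Fin 2) F ≃ₐ[F] MvPolynomial (Fin 2) F)
    (hdeg : ∀ p : MvPolynomial (Fin 2) F, (σ p).totalDegree = p.totalDegree)
    (q r : MvPolynomial (Fin 2) F) (hq : q ≠ 0) (hr : r ≠ 0) :
    Dis σ q r = ⊤ ↔
      ∃ p : MvPolynomial (Fin 2) F, p ∣ r ∧ 0 < p.totalDegree ∧
        (∃ k : ℕ, 0 < k ∧ ∃ c : F, c ≠ 0 ∧ (σ ^ k) p = C c * p) ∧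
        ∃ n : ℕ, (σ ^ n) p ∣ q :=
  stmt9_general σ q r hq hr
end

section
/- Let σ be a degree-preserving automorphism of F(α,β), a, b ∈ F, A, B, C ∈ F[α,β] with gcd(Ā, σ^h(B̄)) = 1 for all h ∈ ℕ (where Ā, B̄ are the finite parts of A, B). Suppose x = p/q with p, q ∈ F[α,β] coprime satisfies a·A·σ(x) + b·σ⁻¹(B)·x = C. Then the finite part q̄ of the splitting factorization of q is a constant, i.e., every nonconstant irreducible factor of q has infinite dispersion. -/
open MvPolynomial


open MvPolynomial

/-!
Suppose an irreducible factor `d` of `q` had finite dispersion. Then its shifts `σ^j d` are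
pairwise non-associated, so only finitely many of them divide `q`; let `M` and `L` be the largest
and the smallest such `j`. Clearing denominators gives
`a A σ(p) q + b σ⁻¹(B) p σ(q) = C' q σ(q)`. Now `σ^(M+1) d` divides `σ q` but neither `q` nor
`σ p`, so it divides `A`, hence `Ā`; and `σ^L d` divides `q` but neither `p` nor `σ q`, so it
divides `σ⁻¹ B`, whence `σ^(L+1) d` divides `B̄`. Applying `σ^(M-L)`, the nonunit `σ^(M+1) d`
divides both `Ā` and `σ^(M-L) B̄`, contradicting `gcd(Ā, σ^h B̄) = 1`.
-/

namespace AlgEquiv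

variable {F R : Type*} [CommSemiring F] [Semiring R] [Algebra F R] (σ : R ≃ₐ[F] R)

theorem zpow_apply_zpow_apply (j k : ℤ) (x : R) : (σ ^ j) ((σ ^ k) x) = (σ ^ (j + k)) x := by
  rw [zpow_add, mul_apply]

theorem zpow_apply_pow_apply_comm (k : ℤ) (n : ℕ) (x : R) :
    (σ ^ k) ((σ ^ n) x) = (σ ^ n) ((σ ^ k) x) := by
  rw [← zpow_natCast, zpow_apply_zpow_apply, add_comm, ← zpow_apply_zpow_apply]

theorem zpow_add_one_apply (k : ℤ) (x : R) : (σ ^ (k + 1)) x = σ ((σ ^ k) x) := by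
  rw [add_comm, ← zpow_apply_zpow_apply, zpow_one]

theorem associated_map_iff (e : R ≃ₐ[F] R) {x y : R} :
    Associated (e x) (e y) ↔ Associated x y :=
  ⟨fun h => by simpa using h.map e.symm, Associated.map e⟩

end AlgEquiv

open AlgEquiv

theorem UniqueFactorizationMonoid.finite_setOf_dvd {ι M : Type*} [CommMonoidWithZero M]
    [UniqueFactorizationMonoid M] {f : ι → M} (hf : ∀ i, Irreducible (f i))
    (hinj : ∀ i j, Associated (f i) (f j) → i = j) {q : M} (hq : q ≠ 0) :
    Set.Finite {i | f i ∣ q} := by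
  let := UniqueFactorizationMonoid.strongNormalizationMonoid (α := M)
  refine Set.Finite.of_injOn (f := fun i => normalize (f i)) (fun i hi => ?_)
    (fun i _ j _ hij => hinj i j (normalize_eq_normalize_iff_associated.mp hij))
    (normalizedFactors q).finite_toSet
  exact (mem_normalizedFactors_iff' hq).mpr
    ⟨(normalize_associated _).symm.irreducible (hf i), normalize_idem _,
      normalize_dvd_iff.mpr hi⟩

section SemiPeriodic

variable {F R : Type*} [CommSemiring F] [Semiring R] [Algebra F R]

def IsSemiPeriodic (σ : R ≃ₐ[F] R) (t : R) : Prop :=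
  ∃ n : ℕ, 0 < n ∧ Associated t ((σ ^ n) t)

variable {σ : R ≃ₐ[F] R} {t : R}

theorem isSemiPeriodic_zpow_apply_iff (k : ℤ) :
    IsSemiPeriodic σ ((σ ^ k) t) ↔ IsSemiPeriodic σ t := by
  simp only [IsSemiPeriodic, ← zpow_apply_pow_apply_comm, associated_map_iff]

theorem IsSemiPeriodic.of_associated_zpow_apply {j k : ℤ} (hjk : j < k)
    (h : Associated ((σ ^ j) t) ((σ ^ k) t)) : IsSemiPeriodic σ t := by
  refine ⟨(k - j).toNat, by omega, ?_⟩
  rwa [← associated_map_iff (σ ^ j), ← zpow_natCast, zpow_apply_zpow_apply,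
    Int.toNat_of_nonneg (by omega), add_sub_cancel]

theorem eq_of_associated_zpow_apply (ht : ¬IsSemiPeriodic σ t) {j k : ℤ}
    (h : Associated ((σ ^ j) t) ((σ ^ k) t)) : j = k := by
  rcases lt_trichotomy j k with hjk | rfl | hkj
  · exact absurd (.of_associated_zpow_apply hjk h) ht
  · rfl
  · exact absurd (.of_associated_zpow_apply hkj h.symm) ht

end SemiPeriodic

section Shifts

variable {F R : Type*} [CommSemiring F] [CommSemiring R] [UniqueFactorizationMonoid R]
  [Algebra F R] {σ : R ≃ₐ[F] R} {t p q : R}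

theorem finite_setOf_zpow_apply_dvd (ht : Irreducible t) (hper : ¬IsSemiPeriodic σ t)
    (hq : q ≠ 0) : Set.Finite {j : ℤ | (σ ^ j) t ∣ q} :=
  UniqueFactorizationMonoid.finite_setOf_dvd (fun _ => ht.map _)
    (fun _ _ => eq_of_associated_zpow_apply hper) hq

theorem zpow_succ_apply_dvd_of_dvd_mul {u : R} (ht : Irreducible t) (hpq : IsRelPrime p q)
    {M : ℤ} (hM : (σ ^ M) t ∣ q) (hM1 : ¬(σ ^ (M + 1)) t ∣ q)
    (hdiv : σ q ∣ u * σ p * q) :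
    (σ ^ (M + 1)) t ∣ u := by
  have hP : Prime ((σ ^ (M + 1)) t) := (ht.map _).prime
  have hPσq : (σ ^ (M + 1)) t ∣ σ q := zpow_add_one_apply σ M t ▸ map_dvd σ hM
  rcases hP.dvd_mul.mp (hPσq.trans hdiv) with h | h
  · refine (hP.dvd_mul.mp h).resolve_right fun hp => ?_
    rw [zpow_add_one_apply, map_dvd_iff] at hp
    exact (ht.map _).not_isUnit (hpq hp hM)
  · exact absurd h hM1

theorem zpow_apply_dvd_of_dvd_mul {v : R} (ht : Irreducible t) (hpq : IsRelPrime p q)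
    {L : ℤ} (hL : (σ ^ L) t ∣ q) (hL1 : ¬(σ ^ (L - 1)) t ∣ q) (hdiv : q ∣ v * p * σ q) :
    (σ ^ L) t ∣ v := by
  have hQ : Prime ((σ ^ L) t) := (ht.map _).prime
  rcases hQ.dvd_mul.mp (hL.trans hdiv) with h | h
  · exact (hQ.dvd_mul.mp h).resolve_right fun hp => (ht.map _).not_isUnit (hpq hp hL)
  · rw [← sub_add_cancel L 1, zpow_add_one_apply, map_dvd_iff] at h
    exact absurd h hL1

end Shifts

theorem mul_add_mul_eq_of_difference_eq {F R K : Type*} [CommSemiring F] [CommRing R]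
    [Algebra F R] [Field K] [Algebra R K] [IsFractionRing R K] (σ : R ≃ₐ[F] R)
    (τ : K ≃+* K) (hτ : ∀ r, τ (algebraMap R K r) = algebraMap R K (σ r)) {u v w p q : R}
    (hq : q ≠ 0)
    (h : algebraMap R K u * τ (algebraMap R K p / algebraMap R K q) +
      algebraMap R K v * (algebraMap R K p / algebraMap R K q) = algebraMap R K w) :
    u * σ p * q + v * (p * σ q) = w * (q * σ q) := by
  have hq' : algebraMap R K q ≠ 0 := by simpa using hq
  have hσq' : algebraMap R K (σ q) ≠ 0 := by simpa using hq
  rw [map_div₀, hτ, hτ] at h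
  apply IsFractionRing.injective R K
  field_simp at h
  simp only [map_add, map_mul]
  linear_combination h

section Dispersion

variable {F : Type*} [Field F]

theorem MvPolynomial.totalDegree_pos_of_irreducible {ι : Type*} {t : MvPolynomial ι F}
    (ht : Irreducible t) : 0 < t.totalDegree := by
  refine Nat.pos_of_ne_zero fun h => ht.not_isUnit ?_
  refine isUnit_iff_totalDegree_of_isReduced.mpr ⟨isUnit_iff_ne_zero.mpr fun h0 => ?_, h⟩
  exact ht.ne_zero (by rw [totalDegree_eq_zero_iff_eq_C.mp h, h0, C_0])

variable {σ : MvPolynomial (Fin 2) F ≃ₐ[F] MvPolynomial (Fin 2) F} {t : MvPolynomial (Fin 2) F}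

theorem dis_eq_top_of_infinite {p q : MvPolynomial (Fin 2) F} (h : (Spr σ p q).Infinite) :
    Dis σ p q = ⊤ := by
  refine sSup_eq_top.mpr fun b hb => ?_
  obtain ⟨n, hn⟩ : ∃ n : ℕ, b ≤ ((n : ℕ∞) : WithBot ℕ∞) := by
    induction b with
    | bot => exact ⟨0, bot_le⟩
    | coe c =>
      lift c to ℕ using WithBot.coe_lt_coe.mp hb |>.ne
      exact ⟨c, le_rfl⟩
  obtain ⟨m, hm, hnm⟩ := h.exists_gt n
  exact ⟨_, ⟨m, hm, rfl⟩, hn.trans_lt (WithBot.coe_lt_coe.mpr (by exact_mod_cast hnm))⟩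

theorem dis_self_eq_top_iff (ht : Irreducible t) : Dis σ t t = ⊤ ↔ IsSemiPeriodic σ t := by
  constructor
  · intro htop
    by_contra hper
    have hSpr : Spr σ t t ⊆ {0} := by
      rintro m ⟨e, he, het, hem⟩
      by_contra hm
      have heu : ¬IsUnit e := fun hu => he.ne' (isUnit_iff_totalDegree_of_isReduced.mp hu).2
      have hte : t ∣ e := ((ht.dvd_iff.mp het).resolve_left heu).dvd
      exact hper ⟨m, Nat.pos_of_ne_zero hm, ht.associated_of_dvd (ht.map _) (hte.trans hem)⟩
    have hle : Dis σ t t ≤ ((0 : ℕ∞) : WithBot ℕ∞) := by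
      refine sSup_le ?_
      rintro _ ⟨m, hm, rfl⟩
      rw [hSpr hm]
      rfl
    exact (hle.trans_lt (WithBot.coe_lt_coe.mpr (ENat.natCast_lt_top 0))).ne htop
  · rintro ⟨n, hn, hassoc⟩
    have hiter : ∀ i : ℕ, Associated t ((σ ^ (n * i)) t) := by
      intro i
      induction i with
      | zero => simp
      | succ i ih =>
        rw [mul_add_one, pow_add, mul_apply]
        exact ih.trans (hassoc.map _)
    exact dis_eq_top_of_infinite <| Set.infinite_of_injective_forall_mem
      (mul_right_injective₀ hn.ne') fun i =>
        ⟨t, totalDegree_pos_of_irreducible ht, dvd_rfl, (hiter i).dvd⟩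

theorem dvd_of_dvd_mul_of_not_isSemiPeriodic {P u v : MvPolynomial (Fin 2) F}
    (hP : Irreducible P) (hper : ¬IsSemiPeriodic σ P)
    (hu : ∀ d, Irreducible d → d ∣ u → Dis σ d d = ⊤) (h : P ∣ u * v) : P ∣ v :=
  (hP.prime.dvd_mul.mp h).resolve_left fun hPu =>
    hper ((dis_self_eq_top_iff hP).mp (hu P hP hPu))

end Dispersion

theorem stmt13_general {F : Type*} [Field F]
    (σ : MvPolynomial (Fin 2) F ≃ₐ[F] MvPolynomial (Fin 2) F)
    (K : Type*) [Field K] [Algebra (MvPolynomial (Fin 2) F) K]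
    [IsFractionRing (MvPolynomial (Fin 2) F) K]
    (τ : K ≃+* K)
    (hτ : ∀ p : MvPolynomial (Fin 2) F,
      τ (algebraMap (MvPolynomial (Fin 2) F) K p) = algebraMap (MvPolynomial (Fin 2) F) K (σ p))
    (a b : F) (ha : a ≠ 0) (hb : b ≠ 0)
    (A B C' : MvPolynomial (Fin 2) F)
    (Ainf Abar Binf Bbar : MvPolynomial (Fin 2) F)
    (hA : A = Ainf * Abar) (hB : B = Binf * Bbar)
    (hAinf : ∀ d, Irreducible d → d ∣ Ainf → Dis σ d d = ⊤)
    (hBinf : ∀ d, Irreducible d → d ∣ Binf → Dis σ d d = ⊤)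
    (hcop : ∀ h : ℕ, ∀ d : MvPolynomial (Fin 2) F, d ∣ Abar → d ∣ (σ ^ h) Bbar → IsUnit d)
    (p q : MvPolynomial (Fin 2) F) (hq : q ≠ 0)
    (hpq : ∀ d : MvPolynomial (Fin 2) F, d ∣ p → d ∣ q → IsUnit d)
    (heq :
      algebraMap (MvPolynomial (Fin 2) F) K (C a * A) *
          τ (algebraMap (MvPolynomial (Fin 2) F) K p / algebraMap (MvPolynomial (Fin 2) F) K q) +
        algebraMap (MvPolynomial (Fin 2) F) K (C b * σ.symm B) *
          (algebraMap (MvPolynomial (Fin 2) F) K p / algebraMap (MvPolynomial (Fin 2) F) K q) =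
        algebraMap (MvPolynomial (Fin 2) F) K C') :
    ∀ d : MvPolynomial (Fin 2) F, Irreducible d → d ∣ q → Dis σ d d = ⊤ := by
  intro d hd hdq
  rw [dis_self_eq_top_iff hd]
  by_contra hper
  have hper_shift (k : ℤ) : ¬IsSemiPeriodic σ ((σ ^ k) d) :=
    (isSemiPeriodic_zpow_apply_iff k).not.mpr hper
  have key := mul_add_mul_eq_of_difference_eq σ τ hτ hq heq
  have hfin := finite_setOf_zpow_apply_dvd hd hper hq
  have h0 : (0 : ℤ) ∈ {j : ℤ | (σ ^ j) d ∣ q} := by simpa using hdq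
  obtain ⟨M, hM, hMmax⟩ := Set.exists_max_image _ id hfin ⟨0, h0⟩
  obtain ⟨L, hL, hLmin⟩ := Set.exists_min_image _ id hfin ⟨0, h0⟩
  have hAbar : (σ ^ (M + 1)) d ∣ Abar := by
    have h := zpow_succ_apply_dvd_of_dvd_mul (u := C a * A) hd hpq hM
      (fun h => (lt_add_one M).not_ge (hMmax _ h))
      ⟨C' * q - C b * σ.symm B * p, by linear_combination key⟩
    rw [(ha.isUnit.map C).dvd_mul_left, hA] at h
    exact dvd_of_dvd_mul_of_not_isSemiPeriodic (hd.map _) (hper_shift _) hAinf h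
  have hBbar : (σ ^ (L + 1)) d ∣ Bbar := by
    have h := zpow_apply_dvd_of_dvd_mul (v := C b * σ.symm B) hd hpq hL
      (fun h => (sub_one_lt L).not_ge (hLmin _ h))
      ⟨C' * σ q - C a * A * σ p, by linear_combination key⟩
    rw [(hb.isUnit.map C).dvd_mul_left, ← map_dvd_iff σ, apply_symm_apply, hB,
      ← zpow_add_one_apply] at h
    exact dvd_of_dvd_mul_of_not_isSemiPeriodic (hd.map _) (hper_shift _) hBinf h
  have hLM : L ≤ M := hLmin M hM
  have hBbar_shift : (σ ^ (M + 1)) d ∣ (σ ^ (M - L).toNat) Bbar := by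
    rw [← zpow_natCast, Int.toNat_of_nonneg (sub_nonneg.mpr hLM),
      show M + 1 = M - L + (L + 1) by ring, ← zpow_apply_zpow_apply]
    exact map_dvd _ hBbar
  exact (hd.map _).not_isUnit (hcop _ _ hAbar hBbar_shift)

theorem stmt13 {F : Type*} [Field F] (u v : F) (hu : u ≠ 0)
    (σ : MvPolynomial (Fin 2) F ≃ₐ[F] MvPolynomial (Fin 2) F)
    (hα : σ (X 0) = X 1) (hβ : σ (X 1) = C u * X 0 + C v * X 1)
    (hdeg : ∀ p : MvPolynomial (Fin 2) F, (σ p).totalDegree = p.totalDegree)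
    (K : Type*) [Field K] [Algebra (MvPolynomial (Fin 2) F) K]
    [IsFractionRing (MvPolynomial (Fin 2) F) K]
    (τ : K ≃+* K)
    (hτ : ∀ p : MvPolynomial (Fin 2) F,
      τ (algebraMap (MvPolynomial (Fin 2) F) K p) = algebraMap (MvPolynomial (Fin 2) F) K (σ p))
    (a b : F) (ha : a ≠ 0) (hb : b ≠ 0)
    (A B C' : MvPolynomial (Fin 2) F) (hA0 : A ≠ 0) (hB0 : B ≠ 0) (hC0 : C' ≠ 0)
    (Ainf Abar Binf Bbar : MvPolynomial (Fin 2) F)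
    (hA : A = Ainf * Abar) (hB : B = Binf * Bbar)
    (hAinf : ∀ d, Irreducible d → d ∣ Ainf → Dis σ d d = ⊤)
    (hAbar : ∀ d, Irreducible d → d ∣ Abar → Dis σ d d ≠ ⊤)
    (hBinf : ∀ d, Irreducible d → d ∣ Binf → Dis σ d d = ⊤)
    (hBbar : ∀ d, Irreducible d → d ∣ Bbar → Dis σ d d ≠ ⊤)
    (hcop : ∀ h : ℕ, ∀ d : MvPolynomial (Fin 2) F, d ∣ Abar → d ∣ (σ ^ h) Bbar → IsUnit d)
    (p q : MvPolynomial (Fin 2) F) (hq : q ≠ 0)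
    (hpq : ∀ d : MvPolynomial (Fin 2) F, d ∣ p → d ∣ q → IsUnit d)
    (heq :
      algebraMap (MvPolynomial (Fin 2) F) K (C a * A) *
          τ (algebraMap (MvPolynomial (Fin 2) F) K p / algebraMap (MvPolynomial (Fin 2) F) K q) +
        algebraMap (MvPolynomial (Fin 2) F) K (C b * σ.symm B) *
          (algebraMap (MvPolynomial (Fin 2) F) K p / algebraMap (MvPolynomial (Fin 2) F) K q) =
        algebraMap (MvPolynomial (Fin 2) F) K C') :
    ∀ d : MvPolynomial (Fin 2) F, Irreducible d → d ∣ q → Dis σ d d = ⊤ :=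
  stmt13_general σ K τ hτ a b ha hb A B C' Ainf Abar Binf Bbar hA hB hAinf hBinf hcop p q hq hpq heq
end

section
/- Given a nonzero rational function r ∈ F(α,β) and a degree-preserving automorphism σ, there exist polynomials A, B, C ∈ F[α,β] such that r = (A/B)·(σ(C)/C), gcd(Ā, σ^h(B̄)) = 1 for every h ∈ ℕ, gcd(A, C) = 1, and gcd(B, σ(C)) = 1, where Ā, B̄ denote the finite parts of A and B. -/
open MvPolynomial


open MvPolynomial

/-!
Split the numerator and the denominator into their infinite-dispersion and finite parts, and run
the Gosper–Petkovšek reduction on the finite parts `p̄, q̄`: if `h` is the least shift for which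
`p̄` and `σ^h q̄` share an irreducible factor `σ^h g`, remove `σ^h g` from `p̄` and `g` from `q̄`,
and absorb the telescoping product `∏_{j<h} σ^j g` into `C`. Divisibility is well founded, so this
terminates. Every irreducible factor of `σ C` is a shift of a factor of `p̄`, and `σ` preserves the
dispersion, so `C` and `σ C` are coprime to the infinite parts.
-/

open UniqueFactorizationMonoid

section Splitting

variable {α : Type*} [CommMonoidWithZero α] [UniqueFactorizationMonoid α]

theorem exists_mul_eq_of_forall_irreducible_dvd (P : α → Prop)
    (hP : ∀ {x y : α}, Associated x y → (P x ↔ P y)) {p : α} (hp : p ≠ 0) :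
    ∃ p₁ p₂ : α, p = p₁ * p₂ ∧
      (∀ d, Irreducible d → d ∣ p₁ → P d) ∧ (∀ d, Irreducible d → d ∣ p₂ → ¬P d) := by
  induction p using induction_on_prime with
  | h₁ => exact absurd rfl hp
  | h₂ x hx =>
    exact ⟨1, x, (one_mul x).symm,
      fun d hd hdvd => absurd (isUnit_of_dvd_one hdvd) hd.not_isUnit,
      fun d hd hdvd => absurd (isUnit_of_dvd_unit hdvd hx) hd.not_isUnit⟩
  | h₃ a x ha hx ih =>
    obtain ⟨p₁, p₂, rfl, h₁, h₂⟩ := ih ha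
    have hP_of_dvd {d} (hd : Irreducible d) (hdx : d ∣ x) : P d ↔ P x :=
      hP (hd.associated_of_dvd hx.irreducible hdx)
    by_cases hPx : P x
    · refine ⟨x * p₁, p₂, (mul_assoc _ _ _).symm, fun d hd hdvd => ?_, h₂⟩
      rcases (irreducible_iff_prime.mp hd).dvd_or_dvd hdvd with hdx | hdp
      exacts [(hP_of_dvd hd hdx).mpr hPx, h₁ d hd hdp]
    · refine ⟨p₁, x * p₂, mul_left_comm _ _ _, h₁, fun d hd hdvd => ?_⟩
      rcases (irreducible_iff_prime.mp hd).dvd_or_dvd hdvd with hdx | hdp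
      exacts [(hP_of_dvd hd hdx).not.mpr hPx, h₂ d hd hdp]

end Splitting

section GosperPetkovsek

variable {A R : Type*} [CommSemiring A] [CommSemiring R] [Algebra A R] (σ : R ≃ₐ[A] R)

theorem pow_mul_prod_range_pow_apply (x : R) (h : ℕ) :
    (σ ^ h) x * ∏ j ∈ Finset.range h, (σ ^ j) x =
      σ (∏ j ∈ Finset.range h, (σ ^ j) x) * x := by
  rw [map_prod, mul_comm, ← Finset.prod_range_succ, Finset.prod_range_succ', pow_zero,
    AlgEquiv.one_apply]
  simp only [pow_succ', AlgEquiv.mul_apply]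

/-- `p / q = (a / b) · (σ c / c)` in Gosper–Petkovšek form. The field
`exists_pow_dvd_of_dvd_apply` is not part of the classical form: it is what lets the dispersion
of the factors of `p` control that of the factors of `c`. -/
structure IsGosperPetkovsekRepr (p q a b c : R) : Prop where
  ne_zero : c ≠ 0
  dvd_left : a ∣ p
  dvd_right : b ∣ q
  mul_eq : p * b * c = q * a * σ c
  exists_pow_dvd_of_dvd_apply : ∀ e, Irreducible e → e ∣ σ c → ∃ i : ℕ, (σ ^ i) e ∣ p
  isRelPrime_pow : ∀ h : ℕ, IsRelPrime a ((σ ^ h) b)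
  isRelPrime_left : IsRelPrime a c
  isRelPrime_right : IsRelPrime b (σ c)

variable {σ} in
theorem IsGosperPetkovsekRepr.exists_pow_dvd_of_dvd {p q a b c : R}
    (hrepr : IsGosperPetkovsekRepr σ p q a b c) {e : R} (he : Irreducible e) (hec : e ∣ c) :
    ∃ i : ℕ, (σ ^ i) e ∣ p := by
  obtain ⟨i, hi⟩ := hrepr.exists_pow_dvd_of_dvd_apply (σ e) (he.map σ) (map_dvd σ hec)
  exact ⟨i + 1, by rwa [pow_succ, AlgEquiv.mul_apply]⟩

theorem isGosperPetkovsekRepr_self_one [Nontrivial R] {p q : R}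
    (hpq : ∀ h : ℕ, IsRelPrime p ((σ ^ h) q)) :
    IsGosperPetkovsekRepr σ p q p q 1 where
  ne_zero := one_ne_zero
  dvd_left := dvd_rfl
  dvd_right := dvd_rfl
  mul_eq := by rw [map_one, mul_comm p]
  exists_pow_dvd_of_dvd_apply e he hdvd := by
    rw [map_one] at hdvd
    exact absurd (isUnit_of_dvd_one hdvd) he.not_isUnit
  isRelPrime_pow := hpq
  isRelPrime_left := isRelPrime_one_right
  isRelPrime_right := by rw [map_one]; exact isRelPrime_one_right

variable [IsDomain R] [UniqueFactorizationMonoid R]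

variable {σ} in
theorem IsGosperPetkovsekRepr.mul_prod_range {p q a b c g : R} {h : ℕ}
    (hrepr : IsGosperPetkovsekRepr σ p q a b c) (hg : g ≠ 0)
    (hmin : ∀ m < h, IsRelPrime ((σ ^ h) g * p) ((σ ^ m) (g * q))) :
    IsGosperPetkovsekRepr σ ((σ ^ h) g * p) (g * q) a b
      (c * ∏ j ∈ Finset.range h, (σ ^ j) g) := by
  set c₀ := ∏ j ∈ Finset.range h, (σ ^ j) g
  have hσc₀ : σ c₀ = ∏ j ∈ Finset.range h, (σ ^ (j + 1)) g := by
    simp only [c₀, map_prod, pow_succ', AlgEquiv.mul_apply]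
  have hshift : ∀ j < h, ∃ k < h, (σ ^ k) ((σ ^ (j + 1)) g) = (σ ^ h) g := fun j hj =>
    ⟨h - (j + 1), by omega, by rw [← AlgEquiv.mul_apply, ← pow_add, Nat.sub_add_cancel hj]⟩
  refine ⟨?_, ?_, ?_, ?_, ?_, hrepr.isRelPrime_pow, ?_, ?_⟩
  · exact mul_ne_zero hrepr.ne_zero <| Finset.prod_ne_zero_iff.mpr fun j _ =>
      (map_ne_zero_iff _ (σ ^ j).injective).mpr hg
  · exact hrepr.dvd_left.trans (dvd_mul_left _ _)
  · exact hrepr.dvd_right.trans (dvd_mul_left _ _)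
  · calc (σ ^ h) g * p * b * (c * c₀) = (p * b * c) * ((σ ^ h) g * c₀) := by ring
      _ = (q * a * σ c) * (σ c₀ * g) := by rw [hrepr.mul_eq, pow_mul_prod_range_pow_apply]
      _ = g * q * a * σ (c * c₀) := by rw [map_mul]; ring
  · intro e he hdvd
    rw [map_mul] at hdvd
    rcases (irreducible_iff_prime.mp he).dvd_or_dvd hdvd with hc | hc₀
    · obtain ⟨i, hi⟩ := hrepr.exists_pow_dvd_of_dvd_apply e he hc
      exact ⟨i, hi.trans (dvd_mul_left _ _)⟩
    · rw [hσc₀] at hc₀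
      obtain ⟨j, hj, hej⟩ := (irreducible_iff_prime.mp he).exists_mem_finset_dvd hc₀
      obtain ⟨k, -, hk⟩ := hshift j (Finset.mem_range.mp hj)
      exact ⟨k, by simpa only [hk] using (map_dvd (σ ^ k) hej).trans (dvd_mul_right _ _)⟩
  · refine hrepr.isRelPrime_left.mul_right (IsRelPrime.prod_right fun j hj => ?_)
    exact ((hmin j (Finset.mem_range.mp hj)).of_dvd_left
      (hrepr.dvd_left.trans (dvd_mul_left _ _))).of_dvd_right (map_dvd _ (dvd_mul_right _ _))
  · rw [map_mul, hσc₀]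
    refine hrepr.isRelPrime_right.mul_right (IsRelPrime.prod_right fun j hj => ?_)
    obtain ⟨k, hk, hkh⟩ := hshift j (Finset.mem_range.mp hj)
    refine IsRelPrime.of_map (σ ^ k) ?_
    rw [hkh]
    exact ((hmin k hk).symm.of_dvd_left
      (map_dvd _ (hrepr.dvd_right.trans (dvd_mul_left _ _)))).of_dvd_right (dvd_mul_right _ _)

theorem exists_isGosperPetkovsekRepr {p : R} (hp : p ≠ 0) (q : R) :
    ∃ a b c, IsGosperPetkovsekRepr σ p q a b c := by
  classical
  induction p using WellFounded.induction (wellFounded_dvdNotUnit (α := R)) generalizing q with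
  | h p IH =>
  by_cases hS : ∃ m : ℕ, ¬IsRelPrime p ((σ ^ m) q)
  swap
  · push Not at hS
    exact ⟨p, q, 1, isGosperPetkovsekRepr_self_one σ hS⟩
  obtain ⟨h, hh, hmin⟩ : ∃ h, ¬IsRelPrime p ((σ ^ h) q) ∧ ∀ m < h, IsRelPrime p ((σ ^ m) q) :=
    ⟨Nat.find hS, Nat.find_spec hS, fun m hm => not_not.mp (Nat.find_min hS hm)⟩
  obtain ⟨g, hg, hgp, hgq⟩ : ∃ g, Irreducible g ∧ (σ ^ h) g ∣ p ∧ g ∣ q := by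
    by_contra! H
    refine hh
      (WfDvdMonoid.isRelPrime_of_no_irreducible_factors (fun h0 => hp h0.1) fun z hz hzp hzq => ?_)
    refine H ((σ ^ h).symm z) (hz.map _) (by rwa [AlgEquiv.apply_symm_apply]) ?_
    rwa [← map_dvd_iff (σ ^ h), AlgEquiv.apply_symm_apply]
  obtain ⟨p', rfl⟩ := hgp
  obtain ⟨q', rfl⟩ := hgq
  have hp' : p' ≠ 0 := right_ne_zero_of_mul hp
  obtain ⟨a, b, c, hrepr⟩ :=
    IH p' ⟨hp', (σ ^ h) g, (hg.map (σ ^ h)).not_isUnit, mul_comm _ _⟩ hp' q'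
  exact ⟨a, b, _, hrepr.mul_prod_range hg.ne_zero hmin⟩

end GosperPetkovsek

theorem IsFractionRing.div_mul_mul_eq_of_mul_eq {R K : Type*} [CommRing R] [Field K]
    [Algebra R K] [IsFractionRing R K] {p q x y z w : R} (hq : q ∈ nonZeroDivisors R)
    (h : p * x * y = q * z * w) :
    algebraMap R K p / algebraMap R K q * algebraMap R K x * algebraMap R K y =
      algebraMap R K z * algebraMap R K w := by
  have hq' : algebraMap R K q ≠ 0 := (IsLocalization.map_units K ⟨q, hq⟩).ne_zero
  rw [div_mul_eq_mul_div, div_mul_eq_mul_div, div_eq_iff hq']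
  simp only [← map_mul, h]
  exact congrArg (algebraMap R K) (by ring)

section Dispersion

variable {F : Type*} [Field F] (σ : MvPolynomial (Fin 2) F ≃ₐ[F] MvPolynomial (Fin 2) F)

theorem spr_congr {p p' q q' : MvPolynomial (Fin 2) F} (hp : Associated p p')
    (hq : Associated q q') : Spr σ p q = Spr σ p' q' :=
  Set.ext fun m => exists_congr fun d => by
    rw [hp.dvd_iff_dvd_right, (hq.map (σ ^ m)).dvd_iff_dvd_right]

theorem dis_congr {p p' q q' : MvPolynomial (Fin 2) F} (hp : Associated p p')
    (hq : Associated q q') : Dis σ p q = Dis σ p' q' := by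
  rw [Dis, Dis, spr_congr σ hp hq]

variable (hdeg : ∀ p : MvPolynomial (Fin 2) F, (σ p).totalDegree = p.totalDegree)
include hdeg

theorem totalDegree_pow_apply (k : ℕ) (p : MvPolynomial (Fin 2) F) :
    ((σ ^ k) p).totalDegree = p.totalDegree := by
  induction k with
  | zero => rfl
  | succ k ih => rw [pow_succ', AlgEquiv.mul_apply, hdeg, ih]

theorem spr_pow_apply (k : ℕ) (p q : MvPolynomial (Fin 2) F) :
    Spr σ ((σ ^ k) p) ((σ ^ k) q) = Spr σ p q := by
  ext m
  have hcomm : (σ ^ m) ((σ ^ k) q) = (σ ^ k) ((σ ^ m) q) := by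
    rw [← AlgEquiv.mul_apply, ← AlgEquiv.mul_apply, pow_mul_comm]
  simp only [Spr, Set.mem_ofPred_eq]
  rw [(σ ^ k).surjective.exists]
  simp only [totalDegree_pow_apply σ hdeg, hcomm, map_dvd_iff]

theorem dis_pow_apply (k : ℕ) (p q : MvPolynomial (Fin 2) F) :
    Dis σ ((σ ^ k) p) ((σ ^ k) q) = Dis σ p q := by
  rw [Dis, Dis, spr_pow_apply σ hdeg]

theorem isRelPrime_of_forall_pow_dvd {x y z : MvPolynomial (Fin 2) F} (hy : y ≠ 0)
    (hx : ∀ d, Irreducible d → d ∣ x → Dis σ d d = ⊤)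
    (hz : ∀ d, Irreducible d → d ∣ z → Dis σ d d ≠ ⊤)
    (hyz : ∀ e, Irreducible e → e ∣ y → ∃ i : ℕ, (σ ^ i) e ∣ z) : IsRelPrime x y :=
  WfDvdMonoid.isRelPrime_of_no_irreducible_factors (fun h => hy h.2) fun e he hex hey => by
    obtain ⟨i, hi⟩ := hyz e he hey
    exact hz _ (he.map (σ ^ i)) hi (by rw [dis_pow_apply σ hdeg]; exact hx e he hex)

end Dispersion

theorem stmt14_general {F : Type*} [Field F]
    (σ : MvPolynomial (Fin 2) F ≃ₐ[F] MvPolynomial (Fin 2) F)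
    (hdeg : ∀ p : MvPolynomial (Fin 2) F, (σ p).totalDegree = p.totalDegree)
    (K : Type*) [Field K] [Algebra (MvPolynomial (Fin 2) F) K]
    [IsFractionRing (MvPolynomial (Fin 2) F) K]
    (r : K) (hr : r ≠ 0) :
    ∃ A B Cp Ainf Abar Binf Bbar : MvPolynomial (Fin 2) F,
      B ≠ 0 ∧ Cp ≠ 0 ∧
      -- r = (A/B) · (σ(Cp)/Cp), written without division
      r * algebraMap (MvPolynomial (Fin 2) F) K B * algebraMap (MvPolynomial (Fin 2) F) K Cp =
        algebraMap (MvPolynomial (Fin 2) F) K A *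
          algebraMap (MvPolynomial (Fin 2) F) K (σ Cp) ∧
      -- splitting factorizations of A and B
      A = Ainf * Abar ∧ B = Binf * Bbar ∧
      (∀ d, Irreducible d → d ∣ Ainf → Dis σ d d = ⊤) ∧
      (∀ d, Irreducible d → d ∣ Abar → Dis σ d d ≠ ⊤) ∧
      (∀ d, Irreducible d → d ∣ Binf → Dis σ d d = ⊤) ∧
      (∀ d, Irreducible d → d ∣ Bbar → Dis σ d d ≠ ⊤) ∧
      -- (i) gcd(Ā, σ^h B̄) = 1 for all h ∈ ℕ
      (∀ h : ℕ, ∀ d : MvPolynomial (Fin 2) F, d ∣ Abar → d ∣ (σ ^ h) Bbar → IsUnit d) ∧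
      -- (ii) gcd(A, Cp) = 1
      (∀ d : MvPolynomial (Fin 2) F, d ∣ A → d ∣ Cp → IsUnit d) ∧
      -- (iii) gcd(B, σ(Cp)) = 1
      (∀ d : MvPolynomial (Fin 2) F, d ∣ B → d ∣ σ Cp → IsUnit d) := by
  obtain ⟨p, q, hq, rfl⟩ := IsFractionRing.div_surjective (A := MvPolynomial (Fin 2) F) r
  have hq0 : q ≠ 0 := nonZeroDivisors.ne_zero hq
  have hp0 : p ≠ 0 := by rintro rfl; simp at hr
  have hP {x y : MvPolynomial (Fin 2) F} (h : Associated x y) :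
      Dis σ x x = ⊤ ↔ Dis σ y y = ⊤ := by
    rw [dis_congr σ h h]
  obtain ⟨pinf, pbar, rfl, hpinf, hpbar⟩ := exists_mul_eq_of_forall_irreducible_dvd _ hP hp0
  obtain ⟨qinf, qbar, rfl, hqinf, hqbar⟩ := exists_mul_eq_of_forall_irreducible_dvd _ hP hq0
  obtain ⟨a, b, c, hGP⟩ := exists_isGosperPetkovsekRepr σ (right_ne_zero_of_mul hp0) qbar
  have hB : qinf * b ≠ 0 := mul_ne_zero (left_ne_zero_of_mul hq0)
    (ne_zero_of_dvd_ne_zero (right_ne_zero_of_mul hq0) hGP.dvd_right)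
  have hAC : IsRelPrime (pinf * a) c :=
    (isRelPrime_of_forall_pow_dvd σ hdeg hGP.ne_zero hpinf hpbar
      fun e he => hGP.exists_pow_dvd_of_dvd he).mul_left hGP.isRelPrime_left
  have hBσC : IsRelPrime (qinf * b) (σ c) :=
    (isRelPrime_of_forall_pow_dvd σ hdeg ((map_ne_zero_iff σ σ.injective).mpr hGP.ne_zero)
      hqinf hpbar hGP.exists_pow_dvd_of_dvd_apply).mul_left hGP.isRelPrime_right
  have hmul : pinf * pbar * (qinf * b) * c = qinf * qbar * (pinf * a) * σ c := by
    linear_combination pinf * qinf * hGP.mul_eq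
  exact ⟨pinf * a, qinf * b, c, pinf, a, qinf, b, hB, hGP.ne_zero,
    IsFractionRing.div_mul_mul_eq_of_mul_eq hq hmul, rfl, rfl, hpinf,
    fun d hd hda => hpbar d hd (hda.trans hGP.dvd_left), hqinf,
    fun d hd hdb => hqbar d hd (hdb.trans hGP.dvd_right), hGP.isRelPrime_pow, hAC, hBσC⟩

theorem stmt14 {F : Type*} [Field F] (u v : F) (hu : u ≠ 0)
    (σ : MvPolynomial (Fin 2) F ≃ₐ[F] MvPolynomial (Fin 2) F)
    (hα : σ (X 0) = X 1) (hβ : σ (X 1) = C u * X 0 + C v * X 1)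
    (hdeg : ∀ p : MvPolynomial (Fin 2) F, (σ p).totalDegree = p.totalDegree)
    (K : Type*) [Field K] [Algebra (MvPolynomial (Fin 2) F) K]
    [IsFractionRing (MvPolynomial (Fin 2) F) K]
    (r : K) (hr : r ≠ 0) :
    ∃ A B Cp Ainf Abar Binf Bbar : MvPolynomial (Fin 2) F,
      B ≠ 0 ∧ Cp ≠ 0 ∧
      -- r = (A/B) · (σ(Cp)/Cp), written without division
      r * algebraMap (MvPolynomial (Fin 2) F) K B * algebraMap (MvPolynomial (Fin 2) F) K Cp =
        algebraMap (MvPolynomial (Fin 2) F) K A *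
          algebraMap (MvPolynomial (Fin 2) F) K (σ Cp) ∧
      -- splitting factorizations of A and B
      A = Ainf * Abar ∧ B = Binf * Bbar ∧
      (∀ d, Irreducible d → d ∣ Ainf → Dis σ d d = ⊤) ∧
      (∀ d, Irreducible d → d ∣ Abar → Dis σ d d ≠ ⊤) ∧
      (∀ d, Irreducible d → d ∣ Binf → Dis σ d d = ⊤) ∧
      (∀ d, Irreducible d → d ∣ Bbar → Dis σ d d ≠ ⊤) ∧
      -- (i) gcd(Ā, σ^h B̄) = 1 for all h ∈ ℕ
      (∀ h : ℕ, ∀ d : MvPolynomial (Fin 2) F, d ∣ Abar → d ∣ (σ ^ h) Bbar → IsUnit d) ∧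
      -- (ii) gcd(A, Cp) = 1
      (∀ d : MvPolynomial (Fin 2) F, d ∣ A → d ∣ Cp → IsUnit d) ∧
      -- (iii) gcd(B, σ(Cp)) = 1
      (∀ d : MvPolynomial (Fin 2) F, d ∣ B → d ∣ σ Cp → IsUnit d) :=
  stmt14_general σ hdeg K r hr
end

section
/- For the Lucas numbers L_n (L₀=2, L₁=1, L_{n+2}=L_{n+1}+L_n), for every k ≥ 1: ∑_{n=1}^{k} (−1)^{n−1}/(L_{n−1}L_n) = (−1)^{k−1}·φ/(L_k·(L_k + φ·L_{k+1})) + √5/10, where φ = (1+√5)/2. -/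
/-- The Lucas numbers: L₀ = 2, L₁ = 1, L_{n+2} = L_{n+1} + L_n. -/
def lucas : ℕ → ℕ
  | 0 => 2
  | 1 => 1
  | n + 2 => lucas (n + 1) + lucas n

/-!
With `φ, ψ` the roots of `x² = x + 1`, Binet's formula `L_n = φⁿ + ψⁿ` gives
`L_k + φ L_{k+1} = √5 φ^{k+1}`, and `φψ = -1` turns the right-hand side into `F_k / (2 L_k)`.
The partial sums telescope to the same value, since `F_{n+1} L_n - F_n L_{n+1} = 2 (-1)ⁿ`.
-/

open Real Finset goldenRatio

lemma lucas_add_two (n : ℕ) : lucas (n + 2) = lucas (n + 1) + lucas n := rfl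

lemma lucas_pos : ∀ n, 0 < lucas n
  | 0 => Nat.two_pos
  | 1 => Nat.one_pos
  | n + 2 => lucas_add_two n ▸ Nat.add_pos_left (lucas_pos (n + 1)) _

lemma coe_lucas_eq : ∀ n, (lucas n : ℝ) = φ ^ n + ψ ^ n
  | 0 => by norm_num [lucas]
  | 1 => by simp [lucas, goldenRatio_add_goldenConj]
  | n + 2 => by
    rw [lucas_add_two, Nat.cast_add, coe_lucas_eq n, coe_lucas_eq (n + 1)]
    linear_combination (-φ ^ n) * goldenRatio_sq - ψ ^ n * goldenConj_sq

lemma goldenRatio_pow_mul_goldenConj_pow (n : ℕ) : φ ^ n * ψ ^ n = (-1) ^ n := by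
  rw [← mul_pow, goldenRatio_mul_goldenConj]

lemma lucas_add_goldenRatio_mul_lucas_succ (n : ℕ) :
    (lucas n : ℝ) + φ * lucas (n + 1) = √5 * φ ^ (n + 1) := by
  rw [coe_lucas_eq, coe_lucas_eq, ← goldenRatio_sub_goldenConj]
  linear_combination (-φ ^ n) * goldenRatio_sq - ψ ^ n * goldenConj_sq

lemma fib_succ_mul_lucas_sub_fib_mul_lucas_succ (n : ℕ) :
    (Nat.fib (n + 1) * lucas n - Nat.fib n * lucas (n + 1) : ℝ) = 2 * (-1) ^ n := by
  rw [coe_fib_eq, coe_fib_eq, coe_lucas_eq, coe_lucas_eq, ← goldenRatio_pow_mul_goldenConj_pow]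
  field_simp
  linear_combination (2 * φ ^ n * ψ ^ n) * goldenRatio_sub_goldenConj

lemma sum_Icc_neg_one_pow_div_lucas_mul_lucas (k : ℕ) :
    ∑ n ∈ Icc 1 k, (-1 : ℝ) ^ (n - 1) / (lucas (n - 1) * lucas n) = Nat.fib k / (2 * lucas k) := by
  induction k with
  | zero => simp
  | succ k ih =>
    have hk : (lucas k : ℝ) ≠ 0 := by exact_mod_cast (lucas_pos k).ne'
    have hk1 : (lucas (k + 1) : ℝ) ≠ 0 := by exact_mod_cast (lucas_pos (k + 1)).ne'
    rw [sum_Icc_succ_top (Nat.le_add_left 1 k), ih, Nat.add_sub_cancel]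
    field_simp
    linear_combination -fib_succ_mul_lucas_sub_fib_mul_lucas_succ k

theorem stmt16 (k : ℕ) (hk : 1 ≤ k) :
    ∑ n ∈ Finset.Icc 1 k, ((-1 : ℝ)) ^ (n - 1) / (lucas (n - 1) * lucas n) =
      (-1 : ℝ) ^ (k - 1) * ((1 + Real.sqrt 5) / 2) /
          (lucas k * (lucas k + ((1 + Real.sqrt 5) / 2) * lucas (k + 1))) +
        Real.sqrt 5 / 10 := by
  obtain ⟨m, rfl⟩ := Nat.exists_eq_add_of_le' hk
  have hsign : (-1 : ℝ) ^ m = -(φ ^ (m + 1) * ψ ^ (m + 1)) := by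
    rw [goldenRatio_pow_mul_goldenConj_pow, pow_succ]; ring
  have hL : φ ^ (m + 1) + ψ ^ (m + 1) ≠ 0 := by
    rw [← coe_lucas_eq]; exact_mod_cast (lucas_pos _).ne'
  have hφ : φ ^ (m + 1) ≠ 0 := pow_ne_zero _ goldenRatio_ne_zero
  rw [sum_Icc_neg_one_pow_div_lucas_mul_lucas, ← goldenRatio, lucas_add_goldenRatio_mul_lucas_succ,
    Nat.add_sub_cancel, coe_fib_eq, coe_lucas_eq, hsign, pow_succ φ (m + 1)]
  -- `field_simp` would unfold `φ` into `(1 + √5) / 2`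
  generalize φ ^ (m + 1) = a, ψ ^ (m + 1) = b at hL hφ ⊢
  field_simp
  linear_combination (-2 * (a + b)) * sq_sqrt (show (0 : ℝ) ≤ 5 by norm_num)
end
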